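/- arXiv:2110.03401 — 2 statements merged into one kernel-verified Lean document; each statement's English description precedes it below -/
import Mathlib

section
/- Let f₁ and f₂ be multiplicative functions ℕ → ℂ such that, for j = 1,2, f_j satisfies with respect to an integer m_j ≥ 1 the conditions: (i) for some prime q dividing m_j, ∑_{k=0}^∞ f_j(q^k)/q^k = 0; (ii) for each prime power p^a exactly dividing m_j, f_j(p^k) = f_j(p^a) for all k ≥ a; (iii) for each prime p with gcd(p,m_j) = 1, f_j(p^k) = 1 for all k ≥ 1. Let f = f₁ ∗ f₂. Then for all real x > m₁m₂, ∑_{n≤x} f(n) = ∑_{n | m₁m₂} (f ∗ μ ∗ μ)(n) · Δ(x/n), where μ is the Möbius function. -/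
/-!
Write `H_j = f_j ∗ μ` and `G = H₁ ∗ H₂ = f ∗ μ ∗ μ`, so that `f = G ∗ τ`. Condition (ii) makes
`H_j(p^k)` vanish for `k > v_p(m_j)`, so `H_j` is supported on the divisors of `m_j` and `G` on
those of `m₁ m₂`. Hence `∑_{n ≤ x} f(n) = ∑_{d ∣ m₁m₂} G(d) D(x/d)`, where
`D(y) = ∑_{n ≤ y} τ(n) = y log y + (2γ - 1) y + Δ(y)`, and the main terms add up to
`x (log x + 2γ - 1) L_G(1) + x L_G'(1)` for the Dirichlet polynomial `L_G`.
By multiplicativity `L_{H_j}(1)` contains the Euler factor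
`∑_k H_j(q^k) q^{-k} = (1 - 1/q) ∑_k f_j(q^k) q^{-k}`, which is zero by (i). So
`L_G = L_{H₁} L_{H₂}` has a double zero at `s = 1` and the main terms cancel.
-/

/-- `f` is multiplicative: `f 1 = 1` and `f (m*n) = f m * f n` for coprime `m, n`. -/
def IsMultiplicativeFn (f : ℕ → ℂ) : Prop :=
  f 1 = 1 ∧ ∀ m n : ℕ, Nat.Coprime m n → f (m * n) = f m * f n

/-- Conditions i-iii of Theorem 2 with respect to the integer `m`. -/
def SatisfiesConds (f : ℕ → ℂ) (m : ℕ) : Prop :=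
  (∃ q : ℕ, q.Prime ∧ q ∣ m ∧ ∑' k : ℕ, f (q ^ k) / (q : ℂ) ^ k = 0) ∧
  (∀ p a : ℕ, p.Prime → p ^ a ∣ m → ¬ p ^ (a + 1) ∣ m →
    ∀ k : ℕ, a ≤ k → f (p ^ k) = f (p ^ a)) ∧
  (∀ p : ℕ, p.Prime → Nat.Coprime p m → ∀ k : ℕ, 1 ≤ k → f (p ^ k) = 1)

/-- Dirichlet convolution. -/
noncomputable def dconv (f g : ℕ → ℂ) : ℕ → ℂ :=
  fun n => ∑ d ∈ n.divisors, f d * g (n / d)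

/-- The Möbius function, complex valued. -/
def moebiusC : ℕ → ℂ := fun n => ((ArithmeticFunction.moebius n : ℤ) : ℂ)

/-- The error term in the Dirichlet divisor problem. -/
noncomputable def Δ (x : ℝ) : ℝ :=
  (∑ n ∈ Finset.Icc 1 ⌊x⌋₊, (n.divisors.card : ℝ)) - x * Real.log x -
    (2 * Real.eulerMascheroniConstant - 1) * x

open Finset ArithmeticFunction LSeries
open scoped ArithmeticFunction.zeta ArithmeticFunction.Moebius ArithmeticFunction.sigma

theorem tsum_sum_range_mul_pow {𝕜 : Type*} [NormedField 𝕜] [CompleteSpace 𝕜] {b : ℕ → 𝕜}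
    {N : ℕ} (hb : ∀ i, N < i → b i = 0) {x : 𝕜} (hx : ‖x‖ < 1) :
    ∑' k, (∑ i ∈ range (k + 1), b i) * x ^ k =
      (∑ i ∈ range (N + 1), b i * x ^ i) * (1 - x)⁻¹ := by
  have hfin : ∀ i ∉ range (N + 1), b i * x ^ i = 0 := fun i hi => by
    rw [hb i (by simpa using hi), zero_mul]
  rw [← tsum_eq_sum (L := SummationFilter.unconditional ℕ) hfin,
    ← tsum_geometric_of_norm_lt_one hx,
    tsum_mul_tsum_eq_tsum_sum_range_of_summable_norm
      (summable_of_ne_finset_zero (s := range (N + 1)) fun i hi => by rw [hfin i hi, norm_zero])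
      (summable_norm_geometric_of_norm_lt_one hx)]
  refine tsum_congr fun k => ?_
  rw [sum_mul]
  refine sum_congr rfl fun i hi => ?_
  rw [mul_assoc, ← pow_add, Nat.add_sub_cancel' (Nat.lt_succ_iff.mp (mem_range.mp hi))]

namespace ArithmeticFunction

theorem apply_prime_pow_eq_sum_mul_moebius {R : Type*} [Ring R]
    (F : ArithmeticFunction R) {p : ℕ} (hp : p.Prime) (k : ℕ) :
    F (p ^ k) = ∑ i ∈ range (k + 1), (F * μ) (p ^ i) := by
  conv_lhs => rw [← mul_one F, ← coe_moebius_mul_coe_zeta, ← mul_assoc]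
  rw [coe_mul_zeta_apply, Nat.sum_divisors_prime_pow hp]

theorem mul_moebius_apply_prime_pow_eq_zero {R : Type*} [Ring R]
    (F : ArithmeticFunction R) {p a : ℕ} (hp : p.Prime)
    (hF : ∀ k, a ≤ k → F (p ^ k) = F (p ^ a)) {k : ℕ} (hk : a < k) :
    (F * μ) (p ^ k) = 0 := by
  obtain ⟨j, rfl⟩ := Nat.exists_eq_add_of_lt hk
  have h := apply_prime_pow_eq_sum_mul_moebius F hp (a + j + 1)
  rw [sum_range_succ, ← apply_prime_pow_eq_sum_mul_moebius F hp, hF (a + j + 1) (by omega),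
    hF (a + j) (by omega)] at h
  simpa using h

theorem sum_range_mul_moebius_apply_prime_pow_div {𝕜 : Type*} [RCLike 𝕜]
    (F : ArithmeticFunction 𝕜) {p a : ℕ} (hp : p.Prime)
    (hF : ∀ k, a ≤ k → F (p ^ k) = F (p ^ a)) :
    ∑ k ∈ range (a + 1), (F * μ) (p ^ k) / (p : 𝕜) ^ k =
      (1 - (p : 𝕜)⁻¹) * ∑' k, F (p ^ k) / (p : 𝕜) ^ k := by
  have hx : ‖(p : 𝕜)⁻¹‖ < 1 := by
    rw [norm_inv, RCLike.norm_natCast]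
    exact inv_lt_one_of_one_lt₀ (by exact_mod_cast hp.one_lt)
  have hx1 : 1 - (p : 𝕜)⁻¹ ≠ 0 := sub_ne_zero.mpr fun h => by simp [← h] at hx
  simp_rw [div_eq_mul_inv, ← inv_pow, apply_prime_pow_eq_sum_mul_moebius F hp (R := 𝕜)]
  rw [tsum_sum_range_mul_pow (fun i hi => mul_moebius_apply_prime_pow_eq_zero F hp hF hi) hx,
    mul_comm _ (1 - _)⁻¹, mul_inv_cancel_left₀ hx1]

theorem IsMultiplicative.support_subset_divisors {R : Type*}
    [CommMonoidWithZero R] {H : ArithmeticFunction R} (hH : H.IsMultiplicative) {m : ℕ}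
    (hm : m ≠ 0) (h : ∀ p k, p.Prime → m.factorization p < k → H (p ^ k) = 0) :
    Function.support H ⊆ m.divisors := by
  intro d hd
  have hd0 : d ≠ 0 := by rintro rfl; exact hd H.map_zero
  refine Nat.mem_divisors.mpr ⟨?_, hm⟩
  by_contra hdvd
  rw [← Nat.factorization_le_iff_dvd hd0 hm, Finsupp.le_def] at hdvd
  push Not at hdvd
  obtain ⟨p, hp⟩ := hdvd
  have hpd : p ∈ d.primeFactors := by
    rw [← Nat.support_factorization, Finsupp.mem_support_iff]; omega
  exact hd <| (hH.multiplicative_factorization H hd0).trans <|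
    prod_eq_zero hpd (h p _ (Nat.prime_of_mem_primeFactors hpd) hp)

theorem support_mul_subset_divisors_mul {R : Type*} [Semiring R]
    {F G : ArithmeticFunction R} {m n : ℕ} (hF : Function.support F ⊆ m.divisors)
    (hG : Function.support G ⊆ n.divisors) : Function.support (F * G) ⊆ (m * n).divisors := by
  intro d hd
  rw [Function.mem_support, mul_apply] at hd
  obtain ⟨⟨a, b⟩, hab, hne⟩ := exists_ne_zero_of_sum_ne_zero hd
  have ha := Nat.mem_divisors.mp (hF (left_ne_zero_of_mul hne))
  have hb := Nat.mem_divisors.mp (hG (right_ne_zero_of_mul hne))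
  rw [← (Nat.mem_divisorsAntidiagonal.mp hab).1]
  exact Nat.mem_divisors.mpr ⟨mul_dvd_mul ha.1 hb.1, mul_ne_zero ha.2 hb.2⟩

theorem IsMultiplicative.sum_divisors_div_eq_zero_of_prime_pow {K : Type*} [Field K]
    {H : ArithmeticFunction K} (hH : H.IsMultiplicative) {q n : ℕ} (hq : q.Prime)
    (h : ∑ k ∈ range (n.factorization q + 1), H (q ^ k) / (q : K) ^ k = 0) :
    ∑ d ∈ n.divisors, H d / d = 0 := by
  rcases eq_or_ne n 0 with rfl | hn
  · simp
  set Z := H.pdiv ↑ArithmeticFunction.id * ζ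
  have hZ : ∀ d, Z d = ∑ e ∈ d.divisors, H e / e := fun d => by
    simp only [Z, coe_mul_zeta_apply, pdiv_apply, natCoe_apply, id_apply]
  have hZmul : Z.IsMultiplicative :=
    (hH.pdiv isMultiplicative_id.natCast).mul isMultiplicative_zeta.natCast
  rw [← hZ, ← Nat.ordProj_mul_ordCompl_eq_self n q,
    hZmul.map_mul_of_coprime ((Nat.coprime_ordCompl hq hn).pow_left _), hZ,
    Nat.sum_divisors_prime_pow hq]
  push_cast
  rw [h, zero_mul]

theorem sum_Icc_mul_eq_sum_divisors {R : Type*} [Semiring R]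
    {G : ArithmeticFunction R} {M N : ℕ} (hG : Function.support G ⊆ M.divisors) (hMN : M ≤ N)
    (T : ArithmeticFunction R) :
    ∑ n ∈ Icc 1 N, (G * T) n = ∑ d ∈ M.divisors, G d * ∑ e ∈ Icc 1 (N / d), T e := by
  have hIcc : ∀ n, Icc 1 n = Ioc 0 n := fun n => Icc_add_one_left_eq_Ioc 0 n
  simp only [hIcc]
  rw [sum_Ioc_mul_eq_sum_sum]
  refine (sum_subset (fun d hd => ?_) fun d _ hd => ?_).symm
  · exact mem_Ioc.mpr ⟨Nat.pos_of_mem_divisors hd, (Nat.divisor_le hd).trans hMN⟩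
  · rw [Function.notMem_support.mp fun h => hd (hG h), zero_mul]

end ArithmeticFunction

namespace LSeries

theorem support_term_subset {f : ℕ → ℂ} {S : Finset ℕ} (hf : Function.support f ⊆ S)
    (s : ℂ) : Function.support (term f s) ⊆ S := by
  intro n hn
  rcases eq_or_ne n 0 with rfl | hn0
  · exact absurd (term_zero f s) hn
  · rw [Function.mem_support, term_of_ne_zero hn0] at hn
    exact hf (left_ne_zero_of_mul hn)

theorem abscissaOfAbsConv_lt_re_of_support_subset {f : ℕ → ℂ} {S : Finset ℕ}
    (hf : Function.support f ⊆ S) (s : ℂ) : abscissaOfAbsConv f < s.re :=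
  (abscissaOfAbsConv_le_of_forall_lt_LSeriesSummable' (x := ⊥) fun y _ =>
    summable_of_ne_finset_zero fun _ hn => Function.notMem_support.mp
      fun h => hn (support_term_subset hf y h)).trans_lt (EReal.bot_lt_coe _)

end LSeries

theorem LSeries_eq_sum_divisors {f : ℕ → ℂ} {m : ℕ} (hf : Function.support f ⊆ m.divisors)
    (s : ℂ) : LSeries f s = ∑ d ∈ m.divisors, f d / (d : ℂ) ^ s := by
  rw [LSeries, tsum_eq_sum' (support_term_subset hf s)]
  exact sum_congr rfl fun d hd => term_of_ne_zero (Nat.pos_of_mem_divisors hd).ne' f s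

open scoped LSeries.notation in
theorem LSeries_logMul_convolution_eq_zero {f g : ℕ → ℂ} {s : ℂ}
    (hf : abscissaOfAbsConv f < s.re) (hg : abscissaOfAbsConv g < s.re)
    (hfs : LSeries f s = 0) (hgs : LSeries g s = 0) :
    LSeries (logMul (f ⍟ g)) s = 0 := by
  have hfg : LSeries f * LSeries g =ᶠ[nhds s] LSeries (f ⍟ g) := by
    filter_upwards [(Complex.isOpen_re_gt_EReal _).mem_nhds (max_lt hf hg)] with z hz
    exact (LSeries_convolution (le_max_left _ _ |>.trans_lt hz)
      (le_max_right _ _ |>.trans_lt hz)).symm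
  have hprod := ((LSeries_hasDerivAt hf).mul (LSeries_hasDerivAt hg)).congr_of_eventuallyEq
    hfg.symm
  have hderiv := hprod.unique (LSeries_hasDerivAt <|
    (abscissaOfAbsConv_convolution_le f g).trans_lt (max_lt hf hg))
  simpa [hfs, hgs] using hderiv.symm

theorem toArithmeticFunction_apply_of_ne_zero {R : Type*} [Zero R] (f : ℕ → R) {n : ℕ}
    (hn : n ≠ 0) : toArithmeticFunction f n = f n :=
  if_neg hn

theorem dconv_eq_coe_mul (f g : ℕ → ℂ) :
    dconv f g = ⇑(toArithmeticFunction f * toArithmeticFunction g) := by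
  funext n
  rw [← LSeries.convolution, LSeries.convolution_def]
  exact (Nat.sum_divisorsAntidiagonal fun a b => f a * g b).symm

theorem toArithmeticFunction_moebiusC :
    toArithmeticFunction moebiusC = (μ : ArithmeticFunction ℂ) := by
  ext n
  rcases eq_or_ne n 0 with rfl | hn
  · simp
  · rw [toArithmeticFunction_apply_of_ne_zero _ hn, intCoe_apply, moebiusC]

theorem IsMultiplicativeFn.isMultiplicative {f : ℕ → ℂ} (hf : IsMultiplicativeFn f) :
    (toArithmeticFunction f).IsMultiplicative := by
  refine ⟨(toArithmeticFunction_apply_of_ne_zero f one_ne_zero).trans hf.1, fun {m n} hmn => ?_⟩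
  rcases eq_or_ne m 0 with rfl | hm
  · simp
  rcases eq_or_ne n 0 with rfl | hn
  · simp
  simp only [toArithmeticFunction_apply_of_ne_zero f (mul_ne_zero hm hn),
    toArithmeticFunction_apply_of_ne_zero f hm, toArithmeticFunction_apply_of_ne_zero f hn,
    hf.2 m n hmn]

theorem dconv_eq_mul_sigma_zero (f₁ f₂ : ℕ → ℂ) :
    dconv f₁ f₂ = ⇑((toArithmeticFunction f₁ * μ) * (toArithmeticFunction f₂ * μ) * σ 0) := by
  rw [dconv_eq_coe_mul, ← zeta_mul_pow_eq_sigma, pow_zero_eq_zeta, natCoe_mul,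
    show (toArithmeticFunction f₁ * μ) * (toArithmeticFunction f₂ * μ) * (ζ * ζ) =
      toArithmeticFunction f₁ * toArithmeticFunction f₂ * (μ * ζ) * (μ * ζ) by ring,
    coe_moebius_mul_coe_zeta, mul_one, mul_one]

theorem dconv_dconv_dconv_moebiusC (f₁ f₂ : ℕ → ℂ) :
    dconv (dconv (dconv f₁ f₂) moebiusC) moebiusC =
      ⇑((toArithmeticFunction f₁ * μ) * (toArithmeticFunction f₂ * μ)) := by
  simp only [dconv_eq_coe_mul, toArithmeticFunction_eq_self, toArithmeticFunction_moebiusC]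
  congr 1
  ring

namespace SatisfiesConds

variable {f : ℕ → ℂ} {m : ℕ}

theorem apply_prime_pow_eq (h : SatisfiesConds f m) (hm : m ≠ 0) {p : ℕ} (hp : p.Prime) (k : ℕ)
    (hk : m.factorization p ≤ k) :
    toArithmeticFunction f (p ^ k) = toArithmeticFunction f (p ^ m.factorization p) := by
  simp only [toArithmeticFunction_apply_of_ne_zero f (pow_ne_zero _ hp.ne_zero)]
  exact h.2.1 p _ hp (Nat.ordProj_dvd m p) (Nat.pow_succ_factorization_not_dvd hm hp) k hk

theorem support_mul_moebius_subset (h : SatisfiesConds f m) (hf : IsMultiplicativeFn f)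
    (hm : m ≠ 0) : Function.support ⇑(toArithmeticFunction f * μ) ⊆ m.divisors :=
  (hf.isMultiplicative.mul isMultiplicative_moebius.intCast).support_subset_divisors hm
    fun _ _ hp hk => mul_moebius_apply_prime_pow_eq_zero _ hp (h.apply_prime_pow_eq hm hp) hk

theorem LSeries_mul_moebius_one_eq_zero (h : SatisfiesConds f m) (hf : IsMultiplicativeFn f)
    (hm : m ≠ 0) : LSeries ⇑(toArithmeticFunction f * μ) 1 = 0 := by
  obtain ⟨q, hq, -, hsum⟩ := h.1
  rw [LSeries_eq_sum_divisors (h.support_mul_moebius_subset hf hm)]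
  simp only [Complex.cpow_one]
  refine (hf.isMultiplicative.mul isMultiplicative_moebius.intCast)
    |>.sum_divisors_div_eq_zero_of_prime_pow hq ?_
  rw [sum_range_mul_moebius_apply_prime_pow_div _ hq (h.apply_prime_pow_eq hm hq)]
  simp only [toArithmeticFunction_apply_of_ne_zero f (pow_ne_zero _ hq.ne_zero), hsum, mul_zero]

end SatisfiesConds

noncomputable def divisorMainTerm (y : ℝ) : ℝ :=
  y * Real.log y + (2 * Real.eulerMascheroniConstant - 1) * y

theorem sum_Icc_sigma_zero_floor_div (x : ℝ) (d : ℕ) :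
    ∑ e ∈ Icc 1 (⌊x⌋₊ / d), (σ 0 : ArithmeticFunction ℂ) e =
      ((Δ (x / d) + divisorMainTerm (x / d) : ℝ) : ℂ) := by
  rw [Δ, divisorMainTerm, ← Nat.floor_div_natCast]
  simp only [natCoe_apply, sigma_zero_apply]
  push_cast
  ring

theorem sum_divisors_mul_divisorMainTerm_eq_zero {G : ℕ → ℂ} {M : ℕ}
    (hG : Function.support G ⊆ M.divisors) (h₀ : LSeries G 1 = 0)
    (h₁ : LSeries (LSeries.logMul G) 1 = 0) (x : ℝ) :
    ∑ d ∈ M.divisors, G d * (divisorMainTerm (x / d) : ℂ) = 0 := by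
  rcases eq_or_ne x 0 with rfl | hx
  · simp [divisorMainTerm]
  rw [LSeries_eq_sum_divisors hG] at h₀
  rw [LSeries_eq_sum_divisors fun n hn => hG (right_ne_zero_of_mul hn)] at h₁
  simp only [Complex.cpow_one] at h₀ h₁
  have hterm : ∀ d ∈ M.divisors, G d * (divisorMainTerm (x / d) : ℂ) =
      x * (Real.log x + 2 * Real.eulerMascheroniConstant - 1) * (G d / d) -
        x * (Complex.log d * G d / d) := fun d hd => by
    have hd : (d : ℝ) ≠ 0 := Nat.cast_ne_zero.mpr (Nat.pos_of_mem_divisors hd).ne'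
    rw [divisorMainTerm, Real.log_div hx hd, ← Complex.natCast_log]
    push_cast
    field_simp
    ring
  rw [sum_congr rfl hterm, sum_sub_distrib, ← mul_sum, ← mul_sum, h₀, h₁, mul_zero, mul_zero,
    sub_zero]

theorem sum_Icc_mul_sigma_zero_eq_sum_divisors_mul_Δ {G : ArithmeticFunction ℂ} {M : ℕ}
    (hG : Function.support G ⊆ M.divisors) (h₀ : LSeries G 1 = 0)
    (h₁ : LSeries (LSeries.logMul G) 1 = 0) {x : ℝ} (hMx : (M : ℝ) ≤ x) :
    ∑ n ∈ Icc 1 ⌊x⌋₊, (G * σ 0) n = ∑ d ∈ M.divisors, G d * (Δ (x / d) : ℂ) := by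
  rw [sum_Icc_mul_eq_sum_divisors hG (Nat.le_floor hMx), ← sub_eq_zero, ← sum_sub_distrib]
  refine (sum_congr rfl fun d _ => ?_).trans (sum_divisors_mul_divisorMainTerm_eq_zero hG h₀ h₁ x)
  rw [sum_Icc_sigma_zero_floor_div]
  push_cast
  ring

theorem stmt_4 (f₁ f₂ : ℕ → ℂ) (m₁ m₂ : ℕ) (hm₁ : 1 ≤ m₁) (hm₂ : 1 ≤ m₂)
    (hmul₁ : IsMultiplicativeFn f₁) (hmul₂ : IsMultiplicativeFn f₂)
    (h₁ : SatisfiesConds f₁ m₁) (h₂ : SatisfiesConds f₂ m₂) :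
    ∀ x : ℝ, (m₁ * m₂ : ℝ) < x →
      ∑ n ∈ Finset.Icc 1 ⌊x⌋₊, dconv f₁ f₂ n =
        ∑ n ∈ (m₁ * m₂).divisors,
          dconv (dconv (dconv f₁ f₂) moebiusC) moebiusC n * (Δ (x / n) : ℂ) := by
  intro x hx
  have hsupp₁ := h₁.support_mul_moebius_subset hmul₁ (by omega)
  have hsupp₂ := h₂.support_mul_moebius_subset hmul₂ (by omega)
  have habs₁ := abscissaOfAbsConv_lt_re_of_support_subset hsupp₁ 1
  have habs₂ := abscissaOfAbsConv_lt_re_of_support_subset hsupp₂ 1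
  have hzero₁ := h₁.LSeries_mul_moebius_one_eq_zero hmul₁ (by omega)
  have hzero₂ := h₂.LSeries_mul_moebius_one_eq_zero hmul₂ (by omega)
  rw [dconv_dconv_dconv_moebiusC, dconv_eq_mul_sigma_zero]
  refine sum_Icc_mul_sigma_zero_eq_sum_divisors_mul_Δ
    (support_mul_subset_divisors_mul hsupp₁ hsupp₂) ?_ ?_ (by exact_mod_cast hx.le)
  · rw [LSeries_mul habs₁ habs₂, hzero₁, zero_mul]
  · rw [← ArithmeticFunction.coe_mul]
    exact LSeries_logMul_convolution_eq_zero habs₁ habs₂ hzero₁ hzero₂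
end

section
/- Let f : ℕ → ℂ be multiplicative and let m ≥ 1 be an integer such that: for each prime power p^a exactly dividing m, f(p^k) = f(p^a) for all k ≥ a; and for each prime p with gcd(p,m) = 1, f(p^k) = 1 for all k ≥ 1. Then ∑_{n=1}^m f(n) = φ(m) · ∏_{p|m} ∑_{k=0}^∞ f(p^k)/p^k, where φ is Euler's totient function and the product is over primes p dividing m. -/
/-!
The hypothesis says that on prime powers `f` only sees the `m`-part of its argument, so by
multiplicativity `f n = f (gcd m n)`. Grouping `1 ≤ n ≤ m` by `d = gcd m n` gives
`∑ f n = ∑_{d ∣ m} φ (m / d) f d = (f ∗ φ) m`, a Dirichlet convolution of multiplicative functions,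
hence a product of its values at `p ^ a ∥ m`. There `f (p ^ k)` is constant for `k ≥ a`, so the
series `∑ f (p ^ k) / p ^ k` is a finite sum plus a geometric tail, and since
`φ (p ^ j) = p ^ j (1 - 1 / p)` for `j ≥ 1` it equals `(f ∗ φ) (p ^ a) / φ (p ^ a)`.
-/

open Finset
open scoped Nat

theorem apply_prime_pow_eq_apply_prime_pow_min {α : Type*} {f : ℕ → α} {m : ℕ} (hm : m ≠ 0)
    (hf : ∀ p a : ℕ, p.Prime → p ^ a ∣ m → ¬ p ^ (a + 1) ∣ m →
      ∀ k : ℕ, a ≤ k → f (p ^ k) = f (p ^ a))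
    {p : ℕ} (hp : p.Prime) (k : ℕ) : f (p ^ k) = f (p ^ min k (m.factorization p)) := by
  rcases le_total k (m.factorization p) with hk | hk
  · rw [min_eq_left hk]
  · rw [min_eq_right hk]
    exact hf p _ hp (Nat.ordProj_dvd m p) (Nat.pow_succ_factorization_not_dvd hm hp) k hk

theorem apply_eq_apply_gcd {M : Type*} [CommMonoid M] {f : ℕ → M} (h1 : f 1 = 1)
    (hmul : ∀ a b, Nat.Coprime a b → f (a * b) = f a * f b) {m n : ℕ} (hm : m ≠ 0) (hn : n ≠ 0)
    (hf : ∀ p, p.Prime → ∀ k, f (p ^ k) = f (p ^ min k (m.factorization p))) :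
    f n = f (m.gcd n) := by
  have hsupp : (m.gcd n).factorization.support ⊆ n.primeFactors := by
    rw [Nat.support_factorization]
    exact Nat.primeFactors_mono (Nat.gcd_dvd_right m n) hn
  rw [Nat.multiplicative_factorization f hmul h1 hn,
    Nat.multiplicative_factorization f hmul h1 (Nat.gcd_ne_zero_left hm),
    Finsupp.prod_of_support_subset _ hsupp _ fun _ _ ↦ by rw [pow_zero, h1],
    Nat.prod_factorization_eq_prod_primeFactors, Nat.factorization_gcd hm hn]
  refine prod_congr rfl fun p hp ↦ ?_
  rw [Finsupp.inf_apply, inf_comm]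
  exact hf p (Nat.prime_of_mem_primeFactors hp) _

theorem sum_Icc_one_eq_sum_range {M : Type*} [AddCommMonoid M] {g : ℕ → M} {m : ℕ}
    (h : g m = g 0) : ∑ n ∈ Icc 1 m, g n = ∑ n ∈ range m, g n := by
  rcases m with _ | m
  · rfl
  rw [← Ico_add_one_right_eq_Icc, sum_Ico_eq_sum_range, Nat.add_sub_cancel, sum_range_succ,
    sum_range_succ', add_comm 1 m, h]
  simp only [add_comm 1]

theorem sum_range_apply_gcd {M : Type*} [AddCommMonoid M] (g : ℕ → M) (m : ℕ) :
    ∑ k ∈ range m, g (m.gcd k) = ∑ d ∈ m.divisors, φ (m / d) • g d := by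
  rw [← sum_fiberwise_of_maps_to (t := m.divisors) (g := m.gcd) fun k hk ↦
    Nat.mem_divisors.2 ⟨Nat.gcd_dvd_left m k, by rintro rfl; simp at hk⟩]
  refine sum_congr rfl fun d hd ↦ ?_
  rw [Nat.totient_div_of_dvd (Nat.dvd_of_mem_divisors hd), ← sum_const]
  exact sum_congr rfl fun k hk ↦ by rw [(mem_filter.1 hk).2]

theorem hasSum_mul_pow_of_eq_of_le {K : Type*} [NormedDivisionRing K] {u : ℕ → K} {x : K} {a : ℕ}
    (hu : ∀ k, a ≤ k → u k = u a) (hx : ‖x‖ < 1) :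
    HasSum (fun k ↦ u k * x ^ k) (∑ k ∈ range a, u k * x ^ k + u a * x ^ a * (1 - x)⁻¹) := by
  refine (hasSum_nat_add_iff' a).1 ?_
  rw [add_sub_cancel_left]
  refine ((hasSum_geometric_of_norm_lt_one hx).mul_left (u a * x ^ a)).congr_fun fun k ↦ ?_
  rw [hu _ (Nat.le_add_left a k), pow_add, mul_assoc, pow_mul_comm]

theorem sum_range_totient_mul_eq_totient_mul_tsum {𝕜 : Type*} [RCLike 𝕜] {p a : ℕ}
    (hp : p.Prime) (ha : a ≠ 0) {u : ℕ → 𝕜} (hu : ∀ k, a ≤ k → u k = u a) :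
    ∑ k ∈ range (a + 1), (φ (p ^ (a - k)) : 𝕜) * u k = φ (p ^ a) * ∑' k, u k / (p : 𝕜) ^ k := by
  have hp0 : (p : 𝕜) ≠ 0 := by exact_mod_cast hp.ne_zero
  have hx : ‖(p : 𝕜)⁻¹‖ < 1 := by
    rw [norm_inv, RCLike.norm_natCast]
    exact inv_lt_one_of_one_lt₀ (by exact_mod_cast hp.one_lt)
  have htot : ∀ j, j ≠ 0 → (φ (p ^ j) : 𝕜) = p ^ j * (1 - (p : 𝕜)⁻¹) := by
    intro j hj
    obtain ⟨i, rfl⟩ := Nat.exists_eq_add_one_of_ne_zero hj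
    rw [Nat.totient_prime_pow_succ hp, Nat.cast_mul, Nat.cast_sub hp.one_le, Nat.cast_pow,
      Nat.cast_one]
    field_simp
    ring
  have hp1 : (p : 𝕜) - 1 ≠ 0 := sub_ne_zero.2 (by exact_mod_cast hp.one_lt.ne')
  simp_rw [div_eq_mul_inv, ← inv_pow]
  rw [(hasSum_mul_pow_of_eq_of_le hu hx).tsum_eq, sum_range_succ, Nat.sub_self, pow_zero,
    Nat.totient_one, Nat.cast_one, one_mul, mul_add, mul_sum]
  congr 1
  · refine sum_congr rfl fun k hk ↦ ?_
    have hk : k < a := mem_range.1 hk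
    rw [htot _ (Nat.sub_ne_zero_of_lt hk), htot a ha, pow_sub₀ _ hp0 hk.le, inv_pow]
    ring
  · rw [htot a ha, inv_pow]
    field_simp

namespace ArithmeticFunction

/-- The value at `0` is replaced by `0`. -/
def ofFun {R : Type*} [Zero R] (f : ℕ → R) : ArithmeticFunction R :=
  ⟨fun n ↦ if n = 0 then 0 else f n, if_pos rfl⟩

theorem ofFun_apply {R : Type*} [Zero R] (f : ℕ → R) {n : ℕ} (hn : n ≠ 0) : ofFun f n = f n :=
  if_neg hn

theorem isMultiplicative_ofFun {R : Type*} [MonoidWithZero R] {f : ℕ → R} (h1 : f 1 = 1)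
    (hmul : ∀ a b, Nat.Coprime a b → f (a * b) = f a * f b) : (ofFun f).IsMultiplicative :=
  IsMultiplicative.iff_ne_zero.2 ⟨by rw [ofFun_apply f one_ne_zero, h1], fun hm hn hmn ↦ by
    rw [ofFun_apply _ (mul_ne_zero hm hn), ofFun_apply _ hm, ofFun_apply _ hn, hmul _ _ hmn]⟩

def totient : ArithmeticFunction ℕ :=
  ⟨Nat.totient, Nat.totient_zero⟩

theorem totient_apply (n : ℕ) : totient n = φ n :=
  rfl

theorem isMultiplicative_totient : totient.IsMultiplicative :=
  ⟨Nat.totient_one, Nat.totient_mul⟩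

theorem ofFun_mul_totient_apply {R : Type*} [Semiring R] (f : ℕ → R) (n : ℕ) :
    (ofFun f * totient) n = ∑ d ∈ n.divisors, (φ (n / d) : R) * f d := by
  rw [mul_apply,
    Nat.sum_divisorsAntidiagonal fun d e ↦ ofFun f d * (totient : ArithmeticFunction R) e]
  refine sum_congr rfl fun d hd ↦ ?_
  rw [ofFun_apply f (Nat.ne_of_gt (Nat.pos_of_mem_divisors hd)), natCoe_apply, totient_apply]
  exact (Nat.cast_comm _ _).symm

theorem ofFun_mul_totient_apply_prime_pow {R : Type*} [Semiring R] (f : ℕ → R) {p : ℕ}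
    (hp : p.Prime) (a : ℕ) :
    (ofFun f * totient) (p ^ a) = ∑ k ∈ range (a + 1), (φ (p ^ (a - k)) : R) * f (p ^ k) := by
  rw [ofFun_mul_totient_apply, Nat.sum_divisors_prime_pow hp]
  refine sum_congr rfl fun k hk ↦ ?_
  rw [Nat.pow_div (Nat.lt_succ_iff.1 (mem_range.1 hk)) hp.pos]

end ArithmeticFunction

open ArithmeticFunction in
theorem stmt_13_general (f : ℕ → ℂ) (m : ℕ)
    (hmul : IsMultiplicativeFn f)
    (hii : ∀ p a : ℕ, p.Prime → p ^ a ∣ m → ¬ p ^ (a + 1) ∣ m →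
      ∀ k : ℕ, a ≤ k → f (p ^ k) = f (p ^ a)) :
    ∑ n ∈ Finset.Icc 1 m, f n =
      (m.totient : ℂ) * ∏ p ∈ m.primeFactors, ∑' k : ℕ, f (p ^ k) / (p : ℂ) ^ k := by
  rcases eq_or_ne m 0 with rfl | hm
  · simp
  have hf := fun (p : ℕ) (hp : p.Prime) ↦ apply_prime_pow_eq_apply_prime_pow_min hm hii hp
  set G := ofFun f * (totient : ArithmeticFunction ℂ)
  have hG : G.IsMultiplicative :=
    (isMultiplicative_ofFun hmul.1 hmul.2).mul isMultiplicative_totient.natCast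
  have hG_prime_pow : ∀ p ∈ m.primeFactors, G (p ^ m.factorization p) =
      φ (p ^ m.factorization p) * ∑' k : ℕ, f (p ^ k) / (p : ℂ) ^ k := by
    intro p hp
    have hp' := Nat.prime_of_mem_primeFactors hp
    rw [ofFun_mul_totient_apply_prime_pow f hp']
    refine sum_range_totient_mul_eq_totient_mul_tsum hp'
      (Finsupp.mem_support_iff.1 (by rwa [Nat.support_factorization])) fun k hk ↦ ?_
    rw [hf p hp' k, min_eq_right hk]
  calc ∑ n ∈ Icc 1 m, f n = ∑ n ∈ Icc 1 m, f (m.gcd n) :=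
        sum_congr rfl fun n hn ↦ apply_eq_apply_gcd hmul.1 hmul.2 hm
          (Nat.one_le_iff_ne_zero.1 (mem_Icc.1 hn).1) hf
    _ = G m := by
        rw [sum_Icc_one_eq_sum_range (by rw [Nat.gcd_self, Nat.gcd_zero_right]),
          sum_range_apply_gcd, ofFun_mul_totient_apply]
        simp only [nsmul_eq_mul]
    _ = ∏ p ∈ m.primeFactors, G (p ^ m.factorization p) := by
        rw [hG.multiplicative_factorization _ hm, Nat.prod_factorization_eq_prod_primeFactors]
    _ = _ := by
        rw [prod_congr rfl hG_prime_pow, prod_mul_distrib,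
          Nat.multiplicative_factorization φ (@Nat.totient_mul) Nat.totient_one hm,
          Nat.prod_factorization_eq_prod_primeFactors, Nat.cast_prod]

theorem stmt_13 (f : ℕ → ℂ) (m : ℕ) (hm : 1 ≤ m)
    (hmul : IsMultiplicativeFn f)
    (hii : ∀ p a : ℕ, p.Prime → p ^ a ∣ m → ¬ p ^ (a + 1) ∣ m →
      ∀ k : ℕ, a ≤ k → f (p ^ k) = f (p ^ a))
    (hiii : ∀ p : ℕ, p.Prime → Nat.Coprime p m → ∀ k : ℕ, 1 ≤ k → f (p ^ k) = 1) :
    ∑ n ∈ Finset.Icc 1 m, f n =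
      (m.totient : ℂ) * ∏ p ∈ m.primeFactors, ∑' k : ℕ, f (p ^ k) / (p : ℂ) ^ k :=
  stmt_13_general f m hmul hii
end
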